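/- All of Green's relations L, R, H, D, J on the Kiselman semigroup K_n are trivial: any two elements related by any of these relations are equal. -/

import Mathlib

/-- The defining relations of the Kiselman semigroup `K_n`:
`aᵢ² = aᵢ`, and `aᵢaⱼaᵢ = aⱼaᵢaⱼ = aⱼaᵢ` for `i < j`. -/
inductive KisRel (n : ℕ) : FreeMonoid (Fin n) → FreeMonoid (Fin n) → Prop
  | idem (i : Fin n) : KisRel n (.of i * .of i) (.of i)
  | braid₁ {i j : Fin n} (h : i < j) :
      KisRel n (.of i * .of j * .of i) (.of j * .of i)
  | braid₂ {i j : Fin n} (h : i < j) :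
      KisRel n (.of j * .of i * .of j) (.of j * .of i)

/-- The Kiselman semigroup (monoid) `K_n`. -/
abbrev Kiselman (n : ℕ) := PresentedMonoid (KisRel n)

/-- The canonical projection from the free monoid on the generators to `K_n`. -/
def kmk (n : ℕ) : FreeMonoid (Fin n) →* Kiselman n := PresentedMonoid.mk (KisRel n)

/-- The generator `a_{i+1}` (0-indexed: `ka i` is the paper's `a_{i+1}`). -/
def ka {n : ℕ} (i : Fin n) : Kiselman n := PresentedMonoid.of (KisRel n) i

/-- The idempotent `e_X`: the product of the generators indexed by `X` in strictly
decreasing order of indices. -/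
def eX {n : ℕ} (X : Finset (Fin n)) : Kiselman n :=
  kmk n (FreeMonoid.ofList ((X.sort (· ≤ ·)).reverse))

/-!
Write `π = eraseZero : K_{n+1} →* K_n` for the homomorphism deleting the generator `a₀ = ka 0` and
`ι = shift` for the embedding shifting the generators up. Since `a₀ aᵢ a₀ = aᵢ a₀`, a final `a₀`
absorbs all earlier letters `a₀`, so `x a₀ = ι (π x) a₀`. The prefix of `x` up to its last `a₀` is
an invariant of `x` (it is the orbit of a point under a left action of `K_{n+1}`). Comparing these
prefixes on both sides of `v u x = x` reduces the equation to `K_n`, and induction on `n` gives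
`u x = x`. Reversing words and the order of the generators is an anti-automorphism, which gives
the mirror statement `x u v = x → x u = x`. The same prefix decomposition
`K_{n+1} = ι K_n ∪ ι K_n a₀ ι K_n` shows that `K_n` is finite, and in a finite monoid the two
cancellation properties force `J` to be trivial, by passing to idempotent powers. Every other
Green relation is contained in `J`.
-/

theorem exists_isIdempotentElem_pow_succ {M : Type*} [Monoid M] [Finite M] (g : M) :
    ∃ k, IsIdempotentElem (g ^ (k + 1)) := by
  let : TopologicalSpace M := ⊥
  have : DiscreteTopology M := ⟨rfl⟩
  obtain ⟨_, ⟨k, rfl⟩, hk⟩ := exists_idempotent_in_compact_subsemigroup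
    (fun _ => continuous_of_discreteTopology) (Set.range fun k : ℕ => g ^ (k + 1))
    (Set.range_nonempty _) (Set.toFinite _).isCompact
    (by rintro _ ⟨a, rfl⟩ _ ⟨b, rfl⟩; exact ⟨a + b + 1, by rw [← pow_add]; ring_nf⟩)
  exact ⟨k, hk⟩

theorem eq_of_mul_mul_eq_of_mul_mul_eq {M : Type*} [Monoid M] [Finite M]
    (hL : ∀ {x u v : M}, v * u * x = x → u * x = x)
    (hR : ∀ {x u v : M}, x * u * v = x → x * u = x)
    {x y a b c d : M} (hy : a * x * b = y) (hx : c * y * d = x) : x = y := by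
  have hpow (k : ℕ) : (c * a) ^ k * x * (b * d) ^ k = x := by
    induction k with
    | zero => simp
    | succ k ih =>
      calc (c * a) ^ (k + 1) * x * (b * d) ^ (k + 1)
          = (c * a) ^ k * (c * (a * x * b) * d) * (b * d) ^ k := by
            rw [pow_succ, pow_succ']; simp only [mul_assoc]
        _ = x := by rw [hy, hx, ih]
  obtain ⟨k, hk⟩ := exists_isIdempotentElem_pow_succ (c * a)
  obtain ⟨m, hm⟩ := exists_isIdempotentElem_pow_succ (b * d)
  have hax : a * x = x := by
    refine hL (v := (c * a) ^ k * c) ?_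
    calc (c * a) ^ k * c * a * x = (c * a) ^ (k + 1) * x := by
          rw [pow_succ]; simp only [mul_assoc]
      _ = x := by
          conv_lhs => rw [← hpow (k + 1)]
          rw [← mul_assoc, ← mul_assoc, hk.eq, hpow]
  have hxb : x * b = x := by
    refine hR (v := d * (b * d) ^ m) ?_
    calc x * b * (d * (b * d) ^ m) = x * (b * d) ^ (m + 1) := by
          rw [pow_succ']; simp only [mul_assoc]
      _ = x := by
          conv_lhs => rw [← hpow (m + 1)]
          rw [mul_assoc, hm.eq, hpow]
  rw [← hy, hax, hxb]

namespace Kiselman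

variable {n : ℕ}

lemma ka_mul_ka (i : Fin n) : ka i * ka i = ka i :=
  PresentedMonoid.mk_eq_mk_of_rel (KisRel.idem i)

lemma ka_mul_ka_mul_ka_of_lt {i j : Fin n} (h : i < j) : ka i * ka j * ka i = ka j * ka i :=
  PresentedMonoid.mk_eq_mk_of_rel (KisRel.braid₁ h)

lemma ka_mul_ka_mul_ka_of_gt {i j : Fin n} (h : i < j) : ka j * ka i * ka j = ka j * ka i :=
  PresentedMonoid.mk_eq_mk_of_rel (KisRel.braid₂ h)

lemma mem_closure_range_ka (x : Kiselman n) : x ∈ Submonoid.closure (Set.range ka) :=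
  PresentedMonoid.closure_range_of (KisRel n) ▸ Submonoid.mem_top x

@[elab_as_elim]
lemma induction_on {motive : Kiselman n → Prop} (x : Kiselman n) (one : motive 1)
    (ka_mul : ∀ i x, motive x → motive (ka i * x)) : motive x :=
  Submonoid.closure_induction_left (motive := fun x _ => motive x) one
    (by rintro _ ⟨i, rfl⟩ y _; exact ka_mul i y) (mem_closure_range_ka x)

@[elab_as_elim]
lemma induction_on_right {motive : Kiselman n → Prop} (x : Kiselman n) (one : motive 1)
    (mul_ka : ∀ x i, motive x → motive (x * ka i)) : motive x :=
  Submonoid.closure_induction_right (motive := fun x _ => motive x) one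
    (by rintro y _ _ ⟨i, rfl⟩; exact mul_ka y i) (mem_closure_range_ka x)

def lift {M : Type*} [Monoid M] (f : Fin n → M) (idem : ∀ i, f i * f i = f i)
    (braid₁ : ∀ {i j}, i < j → f i * f j * f i = f j * f i)
    (braid₂ : ∀ {i j}, i < j → f j * f i * f j = f j * f i) : Kiselman n →* M :=
  PresentedMonoid.lift f fun _ _ h => by
    cases h with
    | idem i => exact idem i
    | braid₁ h => exact braid₁ h
    | braid₂ h => exact braid₂ h

instance : Subsingleton (Kiselman 0) :=
  ⟨fun x y => by
    have h (z : Kiselman 0) : z = 1 := induction_on z rfl fun i => i.elim0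
    rw [h x, h y]⟩

def shift : Kiselman n →* Kiselman (n + 1) :=
  lift (fun i => ka i.succ) (fun _ => ka_mul_ka _)
    (fun h => ka_mul_ka_mul_ka_of_lt (Fin.succ_lt_succ_iff.mpr h))
    (fun h => ka_mul_ka_mul_ka_of_gt (Fin.succ_lt_succ_iff.mpr h))

def eraseZero : Kiselman (n + 1) →* Kiselman n :=
  lift (Fin.cases 1 ka)
    (fun i => by cases i using Fin.cases <;> simp [ka_mul_ka])
    (fun {i j} h => by
      cases j using Fin.cases with
      | zero => exact absurd h (Fin.not_lt_zero i)
      | succ j =>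
        cases i using Fin.cases with
        | zero => simp
        | succ i => exact ka_mul_ka_mul_ka_of_lt (Fin.succ_lt_succ_iff.mp h))
    (fun {i j} h => by
      cases j using Fin.cases with
      | zero => exact absurd h (Fin.not_lt_zero i)
      | succ j =>
        cases i using Fin.cases with
        | zero => simp [ka_mul_ka]
        | succ i => exact ka_mul_ka_mul_ka_of_gt (Fin.succ_lt_succ_iff.mp h))

@[simp]
lemma shift_ka (i : Fin n) : shift (ka i) = ka i.succ := rfl

@[simp]
lemma eraseZero_ka_zero : eraseZero (ka (0 : Fin (n + 1))) = 1 := rfl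

@[simp]
lemma eraseZero_ka_succ (i : Fin n) : eraseZero (ka i.succ) = ka i := rfl

@[simp]
lemma eraseZero_shift (x : Kiselman n) : eraseZero (shift x) = x := by
  induction x using induction_on with
  | one => simp
  | ka_mul i x ih => simp [ih]

lemma mul_ka_zero (x : Kiselman (n + 1)) : x * ka 0 = shift (eraseZero x) * ka 0 := by
  induction x using induction_on_right with
  | one => simp
  | mul_ka x i ih =>
    cases i using Fin.cases with
    | zero => rw [mul_assoc, ka_mul_ka, map_mul, eraseZero_ka_zero, mul_one, ih]
    | succ i =>
      have hbraid := ka_mul_ka_mul_ka_of_lt (Fin.succ_pos i)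
      calc x * ka i.succ * ka 0 = x * ka 0 * (ka i.succ * ka 0) := by
            conv_lhs => rw [mul_assoc, ← hbraid]
            simp only [mul_assoc]
        _ = shift (eraseZero x) * ka 0 * (ka i.succ * ka 0) := by rw [ih]
        _ = shift (eraseZero (x * ka i.succ)) * ka 0 := by
            rw [mul_assoc _ (ka 0), ← mul_assoc (ka 0), hbraid]
            simp [mul_assoc]

def zeroStep (i : Fin (n + 1)) : Option (Kiselman (n + 1)) → Option (Kiselman (n + 1))
  | none => if i = 0 then some (ka 0) else none
  | some p => some (ka i * p)

def zeroAct : Kiselman (n + 1) →* Function.End (Option (Kiselman (n + 1))) :=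
  lift zeroStep
    (fun i => by
      funext o
      change zeroStep i (zeroStep i o) = zeroStep i o
      cases o <;> by_cases hi : i = 0 <;> simp [zeroStep, hi, ka_mul_ka, ← mul_assoc])
    (fun {i j} h => by
      funext o
      change zeroStep i (zeroStep j (zeroStep i o)) = zeroStep j (zeroStep i o)
      have hj : j ≠ 0 := (lt_of_le_of_lt (Fin.zero_le i) h).ne'
      cases o <;> rcases eq_or_ne i 0 with rfl | hi <;>
        simp [zeroStep, *, ← mul_assoc, ka_mul_ka_mul_ka_of_lt h])
    (fun {i j} h => by
      funext o
      change zeroStep j (zeroStep i (zeroStep j o)) = zeroStep j (zeroStep i o)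
      have hj : j ≠ 0 := (lt_of_le_of_lt (Fin.zero_le i) h).ne'
      cases o <;> rcases eq_or_ne i 0 with rfl | hi <;>
        simp [zeroStep, *, ← mul_assoc, ka_mul_ka_mul_ka_of_gt h])

lemma zeroAct_mul_apply (x y : Kiselman (n + 1)) (o : Option (Kiselman (n + 1))) :
    zeroAct (x * y) o = zeroAct x (zeroAct y o) := by
  rw [map_mul]; rfl

lemma zeroAct_some (x p : Kiselman (n + 1)) : zeroAct x (some p) = some (x * p) := by
  induction x using induction_on with
  | one => simp; rfl
  | ka_mul i x ih => rw [zeroAct_mul_apply, ih, mul_assoc]; rfl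

/-- `some` of the prefix of `x` through its last `ka 0`, or `none` if `ka 0` does not occur. -/
def zeroPrefix (x : Kiselman (n + 1)) : Option (Kiselman (n + 1)) := zeroAct x none

lemma zeroPrefix_mul (x y : Kiselman (n + 1)) : zeroPrefix (x * y) = zeroAct x (zeroPrefix y) :=
  zeroAct_mul_apply x y none

lemma zeroPrefix_eq_none_of_mul {x y : Kiselman (n + 1)} (h : zeroPrefix (x * y) = none) :
    zeroPrefix y = none := by
  rw [zeroPrefix_mul] at h
  cases hy : zeroPrefix y with
  | none => rfl
  | some q => rw [hy, zeroAct_some] at h; cases h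

lemma exists_shift_eq_of_zeroPrefix_eq_none {x : Kiselman (n + 1)} (h : zeroPrefix x = none) :
    ∃ y, shift y = x := by
  induction x using induction_on with
  | one => exact ⟨1, map_one _⟩
  | ka_mul i x ih =>
    have hx := zeroPrefix_eq_none_of_mul h
    obtain ⟨y, rfl⟩ := ih hx
    rw [zeroPrefix_mul, hx] at h
    cases i using Fin.cases with
    | zero => cases h
    | succ i => exact ⟨ka i * y, by simp⟩

lemma of_zeroPrefix_eq_some {x p : Kiselman (n + 1)} (h : zeroPrefix x = some p) :
    p * ka 0 = p ∧ ∃ c, p * shift c = x := by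
  induction x using induction_on generalizing p with
  | one => cases h
  | ka_mul i x ih =>
    rw [zeroPrefix_mul] at h
    cases hx : zeroPrefix x with
    | some q =>
      rw [hx, zeroAct_some, Option.some_inj] at h
      obtain ⟨hq, c, rfl⟩ := ih hx
      subst h
      exact ⟨by rw [mul_assoc, hq], c, mul_assoc _ _ _⟩
    | none =>
      obtain ⟨y, rfl⟩ := exists_shift_eq_of_zeroPrefix_eq_none hx
      rw [hx] at h
      cases i using Fin.cases with
      | zero =>
        cases h
        exact ⟨ka_mul_ka 0, y, rfl⟩
      | succ i => cases h

instance : Finite (Kiselman n) := by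
  induction n with
  | zero => infer_instance
  | succ n ih =>
    have hcover : Set.range shift ∪
        Set.range (fun yc : Kiselman n × Kiselman n => shift yc.1 * ka 0 * shift yc.2) =
        Set.univ := by
      refine Set.eq_univ_of_forall fun x => ?_
      cases hx : zeroPrefix x with
      | none => exact Or.inl (exists_shift_eq_of_zeroPrefix_eq_none hx)
      | some p =>
        obtain ⟨hp, c, rfl⟩ := of_zeroPrefix_eq_some hx
        refine Or.inr ⟨(eraseZero p, c), ?_⟩
        change shift (eraseZero p) * ka 0 * shift c = _
        rw [← mul_ka_zero, hp]
    exact Set.finite_univ_iff.mp (hcover ▸ (Set.finite_range _).union (Set.finite_range _))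

def reverse : Kiselman n →* (Kiselman n)ᵐᵒᵖ :=
  lift (fun i => MulOpposite.op (ka i.rev))
    (fun i => by rw [← MulOpposite.op_mul, ka_mul_ka])
    (fun h => MulOpposite.unop_injective <| by
      simpa [mul_assoc] using ka_mul_ka_mul_ka_of_gt (Fin.rev_lt_rev.mpr h))
    (fun h => MulOpposite.unop_injective <| by
      simpa [mul_assoc] using ka_mul_ka_mul_ka_of_lt (Fin.rev_lt_rev.mpr h))

@[simp]
lemma reverse_ka (i : Fin n) : reverse (ka i) = MulOpposite.op (ka i.rev) := rfl

lemma reverse_injective : Function.Injective (reverse (n := n)) := by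
  refine Function.LeftInverse.injective (g := fun z => (reverse z.unop).unop) fun x => ?_
  induction x using induction_on with
  | one => simp
  | ka_mul i x ih => simp [ih]

theorem mul_eq_of_mul_mul_eq_left {x u v : Kiselman n} (h : v * u * x = x) : u * x = x := by
  induction n with
  | zero => exact Subsingleton.elim _ _
  | succ n ih =>
    have hprefix := congrArg zeroPrefix h
    rw [zeroPrefix_mul] at hprefix
    cases hx : zeroPrefix x with
    | none =>
      rw [hx, ← zeroPrefix] at hprefix
      have hu := zeroPrefix_eq_none_of_mul hprefix
      obtain ⟨x', rfl⟩ := exists_shift_eq_of_zeroPrefix_eq_none hx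
      obtain ⟨u', rfl⟩ := exists_shift_eq_of_zeroPrefix_eq_none hu
      have h' := congrArg eraseZero h
      simp only [map_mul, eraseZero_shift] at h'
      rw [← map_mul, ih h']
    | some p =>
      rw [hx, zeroAct_some, Option.some_inj] at hprefix
      obtain ⟨hp, c, rfl⟩ := of_zeroPrefix_eq_some hx
      have hup' : eraseZero u * eraseZero p = eraseZero p := by
        refine ih (v := eraseZero v) ?_
        simpa only [map_mul] using congrArg eraseZero hprefix
      have hup : u * p = p :=
        calc u * p = u * p * ka 0 := by rw [mul_assoc, hp]
          _ = shift (eraseZero (u * p)) * ka 0 := mul_ka_zero _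
          _ = shift (eraseZero p) * ka 0 := by rw [map_mul, hup']
          _ = p := by rw [← mul_ka_zero, hp]
      rw [← mul_assoc, hup]

theorem mul_eq_of_mul_mul_eq_right {x u v : Kiselman n} (h : x * u * v = x) : x * u = x := by
  have h' := congrArg (fun z => (reverse z).unop) h
  simp only [map_mul, MulOpposite.unop_mul, ← mul_assoc] at h'
  refine reverse_injective (MulOpposite.unop_injective ?_)
  simpa using mul_eq_of_mul_mul_eq_left h'

end Kiselman

/-- Theorem 4: all of Green's relations `L`, `R`, `H`, `D`, `J` on `K_n` are trivial. -/
theorem kiselman_greens_relations_trivial (n : ℕ) (x y : Kiselman n) :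
    (((∃ a, a * x = y) ∧ (∃ b, b * y = x)) → x = y) ∧
    (((∃ a, x * a = y) ∧ (∃ b, y * b = x)) → x = y) ∧
    ((((∃ a, a * x = y) ∧ (∃ b, b * y = x)) ∧
      ((∃ a, x * a = y) ∧ (∃ b, y * b = x))) → x = y) ∧
    ((∃ z : Kiselman n, ((∃ a, a * x = z) ∧ (∃ b, b * z = x)) ∧
      ((∃ a, z * a = y) ∧ (∃ b, y * b = z))) → x = y) ∧
    (((∃ a b, a * x * b = y) ∧ (∃ c d, c * y * d = x)) → x = y) := by
  have hJ {a b c d : Kiselman n} : a * x * b = y → c * y * d = x → x = y :=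
    eq_of_mul_mul_eq_of_mul_mul_eq Kiselman.mul_eq_of_mul_mul_eq_left
      Kiselman.mul_eq_of_mul_mul_eq_right
  refine ⟨?_, ?_, ?_, ?_, ?_⟩
  · rintro ⟨⟨a, ha⟩, b, hb⟩
    exact hJ (b := 1) (d := 1) (by rw [mul_one, ha]) (by rw [mul_one, hb])
  · rintro ⟨⟨a, ha⟩, b, hb⟩
    exact hJ (a := 1) (c := 1) (by rw [one_mul, ha]) (by rw [one_mul, hb])
  · rintro ⟨⟨⟨a, ha⟩, b, hb⟩, -⟩
    exact hJ (b := 1) (d := 1) (by rw [mul_one, ha]) (by rw [mul_one, hb])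
  · rintro ⟨z, ⟨⟨a, ha⟩, b, hb⟩, ⟨c, hc⟩, d, hd⟩
    exact hJ (by rw [ha, hc]) (by rw [mul_assoc, hd, hb])
  · rintro ⟨⟨a, b, hab⟩, c, d, hcd⟩
    exact hJ hab hcd
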